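/- Let Ω ⊆ ℝⁿ be open, let u₁, u₂ : ℝⁿ → ℝ be twice continuously differentiable on Ω with u₁ > 0 on Ω, let V, ρ : Ω → ℝ and λ₁, λ₂ ∈ ℝ, and assume that on Ω: −Δu₁ + V·u₁ = λ₁·ρ·u₁ and −Δu₂ + V·u₂ = λ₂·ρ·u₂. Then the ratio w := u₂/u₁ satisfies on Ω the equation Δw + 2·⟪∇(log u₁), ∇w⟫ = −(λ₂ − λ₁)·ρ·w. -/

import Mathlib

open scoped RealInnerProductSpace

/-- The Euclidean Laplacian: the sum of the pure second partial derivatives. -/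
noncomputable def laplacian {n : ℕ} (f : EuclideanSpace ℝ (Fin n) → ℝ)
    (x : EuclideanSpace ℝ (Fin n)) : ℝ :=
  ∑ i : Fin n, fderiv ℝ (fderiv ℝ f) x (EuclideanSpace.single i 1) (EuclideanSpace.single i 1)

/-! Writing `u₂ = u₁ w` with `w = u₂ / u₁`, the Leibniz rule
`Δ(u₁ w) = w Δu₁ + 2 ⟪∇u₁, ∇w⟫ + u₁ Δw` and `∇ log u₁ = ∇u₁ / u₁` give
`Δw + 2 ⟪∇ log u₁, ∇w⟫ = (Δu₂ - w Δu₁) / u₁`. The two eigenvalue equations make the potential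
`V` cancel from the right-hand side, leaving `-(λ₂ - λ₁) ρ w`. -/

section SecondDerivative

variable {𝕜 E : Type*} [NontriviallyNormedField 𝕜] [NormedAddCommGroup E] [NormedSpace 𝕜 E]
  {f g : E → 𝕜} {x : E}

theorem fderiv_fderiv_mul_apply_self (hf : ContDiffAt 𝕜 2 f x) (hg : ContDiffAt 𝕜 2 g x)
    (v : E) :
    fderiv 𝕜 (fderiv 𝕜 (fun y => f y * g y)) x v v =
      fderiv 𝕜 (fderiv 𝕜 f) x v v * g x + 2 * (fderiv 𝕜 f x v * fderiv 𝕜 g x v)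
        + f x * fderiv 𝕜 (fderiv 𝕜 g) x v v := by
  have hf₁ : DifferentiableAt 𝕜 f x := hf.differentiableAt two_ne_zero
  have hg₁ : DifferentiableAt 𝕜 g x := hg.differentiableAt two_ne_zero
  have hf₂ : DifferentiableAt 𝕜 (fderiv 𝕜 f) x :=
    (hf.fderiv_right (m := 1) le_rfl).differentiableAt one_ne_zero
  have hg₂ : DifferentiableAt 𝕜 (fderiv 𝕜 g) x :=
    (hg.fderiv_right (m := 1) le_rfl).differentiableAt one_ne_zero
  have hleibniz : fderiv 𝕜 (fun y => f y * g y)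
      =ᶠ[nhds x] fun y => f y • fderiv 𝕜 g y + g y • fderiv 𝕜 f y := by
    filter_upwards [hf.eventually (by simp), hg.eventually (by simp)] with y hfy hgy
    exact fderiv_mul (hfy.differentiableAt two_ne_zero) (hgy.differentiableAt two_ne_zero)
  rw [hleibniz.fderiv_eq, fderiv_fun_add (f := fun y => f y • fderiv 𝕜 g y)
    (g := fun y => g y • fderiv 𝕜 f y) (hf₁.smul hg₂) (hg₁.smul hf₂),
    fderiv_fun_smul hf₁ hg₂, fderiv_fun_smul hg₁ hf₂]
  simp only [add_apply, smul_apply, ContinuousLinearMap.smulRight_apply, smul_eq_mul]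
  ring

end SecondDerivative

theorem gradient_comp_log {F : Type*} [NormedAddCommGroup F] [InnerProductSpace ℝ F]
    [CompleteSpace F] {u : F → ℝ} {x : F} (hu : DifferentiableAt ℝ u x) (hne : u x ≠ 0) :
    gradient (fun y => Real.log (u y)) x = (u x)⁻¹ • gradient u x := by
  simp only [gradient, fderiv.log hu hne, map_smul]

section Laplacian

variable {n : ℕ} {f g : EuclideanSpace ℝ (Fin n) → ℝ} {x : EuclideanSpace ℝ (Fin n)}

theorem Filter.EventuallyEq.laplacian_eq (h : f =ᶠ[nhds x] g) : laplacian f x = laplacian g x := by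
  simp only [laplacian, h.fderiv.fderiv_eq]

theorem inner_gradient_eq_sum :
    ⟪gradient f x, gradient g x⟫ = ∑ i : Fin n,
      fderiv ℝ f x (EuclideanSpace.single i 1) * fderiv ℝ g x (EuclideanSpace.single i 1) := by
  rw [← OrthonormalBasis.sum_inner_mul_inner (EuclideanSpace.basisFun (Fin n) ℝ)]
  simp only [EuclideanSpace.basisFun_apply, inner_gradient_left, inner_gradient_right]
  rfl

theorem laplacian_mul (hf : ContDiffAt ℝ 2 f x) (hg : ContDiffAt ℝ 2 g x) :
    laplacian (fun y => f y * g y) x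
      = laplacian f x * g x + 2 * ⟪gradient f x, gradient g x⟫ + f x * laplacian g x := by
  simp only [laplacian, inner_gradient_eq_sum, fderiv_fderiv_mul_apply_self hf hg,
    Finset.sum_add_distrib, Finset.sum_mul, Finset.mul_sum]

theorem laplacian_div_add_two_inner_gradient_log {u₁ u₂ : EuclideanSpace ℝ (Fin n) → ℝ}
    (hu₁ : ContDiffAt ℝ 2 u₁ x) (hu₂ : ContDiffAt ℝ 2 u₂ x) (hne : u₁ x ≠ 0) :
    laplacian (fun y => u₂ y / u₁ y) x
        + 2 * ⟪gradient (fun y => Real.log (u₁ y)) x, gradient (fun y => u₂ y / u₁ y) x⟫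
      = (laplacian u₂ x - u₂ x / u₁ x * laplacian u₁ x) / u₁ x := by
  set w := fun y => u₂ y / u₁ y
  have hfactor : (fun y => u₁ y * w y) =ᶠ[nhds x] u₂ := by
    filter_upwards [hu₁.continuousAt.eventually_ne hne] with y hy
    exact mul_div_cancel₀ (u₂ y) hy
  have hw : ContDiffAt ℝ 2 w x := hu₂.div hu₁ hne
  have hleibniz := laplacian_mul hu₁ hw
  rw [hfactor.laplacian_eq] at hleibniz
  have hu₂x : u₂ x = u₁ x * w x := (mul_div_cancel₀ (u₂ x) hne).symm
  rw [gradient_comp_log (hu₁.differentiableAt two_ne_zero) hne, real_inner_smul_left,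
    hleibniz, hu₂x]
  field_simp
  ring

end Laplacian

theorem ratio_of_eigenfunctions_equation {n : ℕ}
    (Ω : Set (EuclideanSpace ℝ (Fin n))) (hΩ : IsOpen Ω)
    (u₁ u₂ : EuclideanSpace ℝ (Fin n) → ℝ)
    (h₁ : ContDiffOn ℝ 2 u₁ Ω) (h₂ : ContDiffOn ℝ 2 u₂ Ω)
    (hpos : ∀ x ∈ Ω, 0 < u₁ x)
    (V ρ : EuclideanSpace ℝ (Fin n) → ℝ) (lam₁ lam₂ : ℝ)
    (heq₁ : ∀ x ∈ Ω, -laplacian u₁ x + V x * u₁ x = lam₁ * ρ x * u₁ x)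
    (heq₂ : ∀ x ∈ Ω, -laplacian u₂ x + V x * u₂ x = lam₂ * ρ x * u₂ x) :
    ∀ x ∈ Ω,
      laplacian (fun y => u₂ y / u₁ y) x +
          2 * ⟪gradient (fun y => Real.log (u₁ y)) x,
              gradient (fun y => u₂ y / u₁ y) x⟫ =
        -((lam₂ - lam₁) * ρ x * (u₂ x / u₁ x)) := by
  intro x hx
  have hne : u₁ x ≠ 0 := (hpos x hx).ne'
  rw [laplacian_div_add_two_inner_gradient_log (h₁.contDiffAt (hΩ.mem_nhds hx))
    (h₂.contDiffAt (hΩ.mem_nhds hx)) hne, div_eq_iff hne]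
  field_simp
  linear_combination heq₁ x hx * u₂ x - heq₂ x hx * u₁ x
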